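/- Let H be a simple undirected graph on vertex set {0,…,n−1} and let k ≤ n. Construct the information network with node set {0,…,n−1} ∪ {m} ∪ {d}, where m is a dummy node and d is the void node: each edge {i,j} of H with i < j is directed from i to j; each vertex of H with no outgoing directed edge gets a single edge to m; each non-void node distributes weight uniformly over its outgoing edges (so b i u = 1/|D_i| for u in its out-neighbor set D_i); m has its full weight 1 on the edge to d. Then H has a vertex cover of size k if and only if there exists a permanent initial set Â ⊆ {0,…,n−1} ∪ {m} with |Â| = k+1 such that the expected influence over the period [1,1] satisfies σ̄(∅,Â) = n+1. -/
import Mathlib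


open MeasureTheory

/-- An information network: a finite node set `V` with a distinguished void node `d`
and a row-stochastic weight matrix `b` with entries in `[0,1]` and `b d d = 1`. -/
structure InfoNetwork (V : Type*) [Fintype V] where
  d : V
  b : V → V → ℝ
  b_nonneg : ∀ v u, 0 ≤ b v u
  b_le_one : ∀ v u, b v u ≤ 1
  row_sum : ∀ v, ∑ u, b v u = 1
  void_loop : b d d = 1

/-- The uniform probability measure on the interval `(0,1)`. -/
noncomputable def unifMeasure : Measure ℝ := volume.restrict (Set.Ioo (0:ℝ) 1)

/-- Product over `V` of uniform measures on `(0,1)`: the distribution of the thresholds. -/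
noncomputable def thresholdMeasure (V : Type*) [Fintype V] : Measure (V → ℝ) :=
  Measure.pi fun _ : V => unifMeasure

namespace InfoNetwork

variable {V : Type*} [Fintype V]

/-- The set of active nodes at time `t` under the non-progressive linear threshold model,
with transient initial set `A`, permanent initial set `Ahat` and thresholds `θ`. -/
noncomputable def activeSet (N : InfoNetwork V) (A Ahat : Set V) (θ : V → ℝ) : ℕ → Set V
  | 0 => A ∪ Ahat
  | t+1 => Ahat ∪
      {v | v ∉ Ahat ∧ θ v ≤ ∑ u, (N.activeSet A Ahat θ t).indicator (N.b v) u}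

/-- `E[X^t_v(A,Ahat)]`: the probability (over the random thresholds) that `v` is active
at time `t`. -/
noncomputable def EX (N : InfoNetwork V) (A Ahat : Set V) (t : ℕ) (v : V) : ℝ :=
  (thresholdMeasure V {θ | v ∈ N.activeSet A Ahat θ t}).toReal

/-- The expected influence over the period `[1,T]`. -/
noncomputable def sigmaBar (N : InfoNetwork V) (T : ℕ) (A Ahat : Set V) : ℝ :=
  (1 / (T : ℝ)) * ∑ t ∈ Finset.Icc 1 T, ∑ v, N.EX A Ahat t v

/-- The edge relation of the directed graph on `V \ {d}`. -/
def edgeRel (N : InfoNetwork V) (v u : V) : Prop :=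
  v ≠ N.d ∧ u ≠ N.d ∧ 0 < N.b v u

/-- The network is acyclic if the directed graph on `V \ {d}` has no directed cycle. -/
def Acyclic (N : InfoNetwork V) : Prop :=
  ∀ v, ¬ Relation.TransGen N.edgeRel v v

end InfoNetwork

/-- A real-valued set function `f` is submodular on the ground set `S`. -/
def SubmodularOn {V : Type*} (S : Set V) (f : Set V → ℝ) : Prop :=
  ∀ A B : Set V, A ⊆ B → B ⊆ S → ∀ w ∈ S, w ∉ B →
    f (insert w B) - f B ≤ f (insert w A) - f A

/-- The out-neighbours of `i` when the edges of `H` are directed from smaller to larger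
endpoints. -/
def outNbr {n : ℕ} (H : SimpleGraph (Fin n)) [DecidableRel H.Adj] (i : Fin n) :
    Finset (Fin n) :=
  Finset.univ.filter fun j => H.Adj i j ∧ i < j

/-- The information network of the vertex-cover reduction: node set `Fin n ⊕ Bool`, where
`Sum.inr true` is the dummy node `m` and `Sum.inr false` is the void node `d`; each edge
`{i,j}` of `H` with `i < j` is directed from `i` to `j`; a vertex with no outgoing directed
edge gets a single edge to `m`; each non-void node distributes its weight uniformly over its
outgoing edges; `m` has its full weight on the edge to `d`. -/
noncomputable def coverNet {n : ℕ} (H : SimpleGraph (Fin n)) [DecidableRel H.Adj] :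
    InfoNetwork (Fin n ⊕ Bool) where
  d := Sum.inr false
  b x y :=
    match x, y with
    | Sum.inl i, Sum.inl j => if H.Adj i j ∧ i < j then ((outNbr H i).card : ℝ)⁻¹ else 0
    | Sum.inl i, Sum.inr c => if c = true ∧ outNbr H i = ∅ then 1 else 0
    | Sum.inr _, Sum.inl _ => 0
    | Sum.inr _, Sum.inr c => if c = false then 1 else 0
  b_nonneg := by
    rintro (i | c) (j | c') <;> dsimp only
    · split_ifs <;> positivity
    · split_ifs <;> positivity
    · positivity
    · split_ifs <;> positivity
  b_le_one := by
    rintro (i | c) (j | c') <;> dsimp only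
    · split_ifs with h
      · have hmem : j ∈ outNbr H i := by
          simp [outNbr, h.1, h.2]
        have h1 : (1 : ℝ) ≤ ((outNbr H i).card : ℝ) := by
          exact_mod_cast Nat.one_le_iff_ne_zero.mpr
            (Finset.card_ne_zero_of_mem hmem)
        exact inv_le_one_of_one_le₀ h1
      · norm_num
    · split_ifs <;> norm_num
    · norm_num
    · split_ifs <;> norm_num
  row_sum := by
    rintro (i | c)
    · rw [Fintype.sum_sum_type]
      have h1 : (∑ j : Fin n, if H.Adj i j ∧ i < j then ((outNbr H i).card : ℝ)⁻¹ else 0)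
          = ((outNbr H i).card : ℝ) * ((outNbr H i).card : ℝ)⁻¹ := by
        rw [← Finset.sum_filter]
        simp [outNbr, Finset.sum_const, mul_comm]
      rw [h1]
      by_cases hemp : outNbr H i = ∅
      · simp [hemp]
      · have hcard : ((outNbr H i).card : ℝ) ≠ 0 := by
          exact_mod_cast Finset.card_ne_zero.mpr (Finset.nonempty_iff_ne_empty.mpr hemp)
        rw [mul_inv_cancel₀ hcard]
        simp [hemp]
    · rw [Fintype.sum_sum_type]
      simp
  void_loop := by norm_num

instance : IsProbabilityMeasure unifMeasure :=
  ⟨by simp [unifMeasure, Real.volume_Ioo]⟩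

instance {V : Type*} [Fintype V] : IsProbabilityMeasure (thresholdMeasure V) := by
  unfold thresholdMeasure; infer_instance

lemma thresholdMeasure_le {V : Type*} [Fintype V] (v : V) (c : ℝ) (h0 : 0 ≤ c) (h1 : c ≤ 1) :
    thresholdMeasure V {θ | θ v ≤ c} = ENNReal.ofReal c := by
  classical
  have hset : {θ : V → ℝ | θ v ≤ c}
      = Set.pi Set.univ (fun u => if u = v then Set.Iic c else Set.univ) := by
    ext θ
    simp only [Set.mem_setOf_eq, Set.mem_pi, Set.mem_univ, forall_true_left]
    constructor
    · intro h u
      by_cases hu : u = v <;> simp [hu, h]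
    · intro h
      have := h v
      simpa using this
  rw [hset, thresholdMeasure, Measure.pi_pi]
  have huni : unifMeasure (Set.Iic c) = ENNReal.ofReal c := by
    rw [unifMeasure, Measure.restrict_apply measurableSet_Iic]
    apply le_antisymm
    · refine le_trans (measure_mono (t := Set.Ioc 0 c) ?_) (le_of_eq ?_)
      · rintro x ⟨hx1, hx2, _⟩
        exact Set.mem_Ioc.2 ⟨hx2, hx1⟩
      · rw [Real.volume_Ioc]; norm_num
    · rw [show ENNReal.ofReal c = volume (Set.Ioo 0 c) by rw [Real.volume_Ioo]; norm_num]
      apply measure_mono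
      rintro x ⟨hx1, hx2⟩
      exact ⟨le_of_lt hx2, hx1, lt_of_lt_of_le hx2 h1⟩
  have : ∀ u : V, unifMeasure (if u = v then Set.Iic c else Set.univ)
      = if u = v then ENNReal.ofReal c else 1 := by
    intro u
    by_cases hu : u = v
    · simp [hu, huni]
    · simp [hu]
  rw [Finset.prod_congr rfl (fun u _ => this u)]
  simp

open Classical in
lemma EX_one {V : Type*} [Fintype V] (N : InfoNetwork V) (Ahat : Set V) (v : V) :
    N.EX ∅ Ahat 1 v = if v ∈ Ahat then 1 else ∑ u, Ahat.indicator (N.b v) u := by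
  classical
  have hA0 : ∀ θ : V → ℝ, N.activeSet ∅ Ahat θ 0 = Ahat := by
    intro θ; simp [InfoNetwork.activeSet]
  set c : ℝ := ∑ u, Ahat.indicator (N.b v) u with hc
  have hset : {θ : V → ℝ | v ∈ N.activeSet ∅ Ahat θ 1}
      = if v ∈ Ahat then Set.univ else {θ | θ v ≤ c} := by
    ext θ
    simp only [InfoNetwork.activeSet, hA0]
    by_cases hv : v ∈ Ahat <;>
      simp [hv, Set.mem_setOf_eq, Set.mem_union, hc]
  rw [InfoNetwork.EX, hset]
  by_cases hv : v ∈ Ahat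
  · simp [hv]
  · have h0 : 0 ≤ c :=
      Finset.sum_nonneg fun u _ => Set.indicator_nonneg (fun x _ => N.b_nonneg v x) u
    have h1 : c ≤ 1 := by
      calc c ≤ ∑ u, N.b v u := Finset.sum_le_sum fun u _ =>
            Set.indicator_le_self' (fun x _ => N.b_nonneg v x) u
        _ = 1 := N.row_sum v
    simp only [hv, if_false]
    rw [thresholdMeasure_le v c h0 h1, ENNReal.toReal_ofReal h0]

lemma sigmaBar_one {V : Type*} [Fintype V] (N : InfoNetwork V) (Ahat : Set V) :
    N.sigmaBar 1 ∅ Ahat = ∑ v, N.EX ∅ Ahat 1 v := by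
  simp [InfoNetwork.sigmaBar]

/-- `H` has a vertex cover of size `k` iff there is a permanent initial set
`Ahat` of non-void nodes with `|Ahat| = k + 1` whose expected influence over the period
`[1,1]` equals `n + 1`. -/
theorem vertexCover_iff_full_influence {n : ℕ} (k : ℕ) (hk : k ≤ n)
    (H : SimpleGraph (Fin n)) [DecidableRel H.Adj] :
    (∃ S : Finset (Fin n), S.card = k ∧ ∀ i j : Fin n, H.Adj i j → i ∈ S ∨ j ∈ S) ↔
    (∃ Ahat : Set (Fin n ⊕ Bool), Ahat ⊆ {x | x ≠ (coverNet H).d} ∧ Ahat.ncard = k + 1 ∧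
      (coverNet H).sigmaBar 1 ∅ Ahat = (n : ℝ) + 1) := by
  classical
  set N := coverNet H with hN
  have hd : N.d = Sum.inr false := rfl
  have hbll : ∀ i j, N.b (Sum.inl i) (Sum.inl j)
      = if H.Adj i j ∧ i < j then ((outNbr H i).card : ℝ)⁻¹ else 0 := fun i j => rfl
  have hblr : ∀ i c, N.b (Sum.inl i) (Sum.inr c)
      = if c = true ∧ outNbr H i = ∅ then 1 else 0 := fun i c => rfl
  have hbrl : ∀ c j, N.b (Sum.inr c) (Sum.inl j) = (0:ℝ) := fun c j => rfl
  have hbrr : ∀ c c', N.b (Sum.inr c) (Sum.inr c') = if c' = false then 1 else 0 :=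
    fun c c' => rfl
  -- characterization of full weight into Ahat
  have hfull : ∀ (Ahat : Set (Fin n ⊕ Bool)) (v : Fin n ⊕ Bool),
      ((∑ u, Ahat.indicator (N.b v) u = 1) ↔ ∀ u, u ∉ Ahat → N.b v u = 0) := by
    intro Ahat v
    constructor
    · intro h1 u hu
      have hle : ∀ u ∈ Finset.univ, Ahat.indicator (N.b v) u ≤ N.b v u := fun u _ =>
        Set.indicator_le_self' (fun x _ => N.b_nonneg v x) u
      have heq : ∑ u, Ahat.indicator (N.b v) u = ∑ u, N.b v u := by
        rw [h1, N.row_sum]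
      have := (Finset.sum_eq_sum_iff_of_le hle).1 heq u (Finset.mem_univ u)
      rw [← this, Set.indicator_of_notMem hu]
    · intro h
      rw [show ∑ u, Ahat.indicator (N.b v) u = ∑ u, N.b v u from
        Finset.sum_congr rfl fun u _ => by
          by_cases hu : u ∈ Ahat
          · exact Set.indicator_of_mem hu _
          · rw [Set.indicator_of_notMem hu, h u hu]]
      exact N.row_sum v
  -- characterization of sigmaBar = n + 1
  have key : ∀ Ahat : Set (Fin n ⊕ Bool), Ahat ⊆ {x | x ≠ N.d} →
      (N.sigmaBar 1 ∅ Ahat = (n : ℝ) + 1 ↔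
        ∀ v, v ≠ N.d → v ∉ Ahat → ∑ u, Ahat.indicator (N.b v) u = 1) := by
    intro Ahat hsub
    have hdA : N.d ∉ Ahat := fun h => (hsub h) rfl
    have hfd : N.EX ∅ Ahat 1 N.d = 0 := by
      rw [EX_one, if_neg hdA]
      apply Finset.sum_eq_zero
      intro u _
      by_cases hu : u ∈ Ahat
      · rw [Set.indicator_of_mem hu]
        have hud : u ≠ N.d := hsub hu
        rcases u with i | c
        · exact hbrl false i
        · rcases c with _ | _
          · exact absurd rfl hud
          · rw [hd] at *
            simpa using hbrr false true
      · exact Set.indicator_of_notMem hu _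
    have hle1 : ∀ v, N.EX ∅ Ahat 1 v ≤ 1 := by
      intro v
      rw [EX_one]
      by_cases hv : v ∈ Ahat
      · simp [hv]
      · rw [if_neg hv]
        calc ∑ u, Ahat.indicator (N.b v) u ≤ ∑ u, N.b v u :=
              Finset.sum_le_sum fun u _ =>
                Set.indicator_le_self' (fun x _ => N.b_nonneg v x) u
          _ = 1 := N.row_sum v
    have hsum : N.sigmaBar 1 ∅ Ahat = ∑ v ∈ Finset.univ.erase N.d, N.EX ∅ Ahat 1 v := by
      rw [sigmaBar_one, ← Finset.add_sum_erase _ _ (Finset.mem_univ N.d), hfd, zero_add]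
    have hcard : (Finset.univ.erase N.d).card = n + 1 := by
      rw [Finset.card_erase_of_mem (Finset.mem_univ _)]
      simp
    constructor
    · intro hσ v hv hvA
      rw [hsum] at hσ
      have hone : ∑ v ∈ Finset.univ.erase N.d, N.EX ∅ Ahat 1 v
          = ∑ v ∈ Finset.univ.erase N.d, (1:ℝ) := by
        rw [hσ, Finset.sum_const, hcard]
        push_cast
        ring
      have := (Finset.sum_eq_sum_iff_of_le (fun v _ => hle1 v)).1 hone v
        (Finset.mem_erase.2 ⟨hv, Finset.mem_univ v⟩)
      rw [EX_one, if_neg hvA] at this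
      exact this
    · intro hall
      rw [hsum]
      have : ∀ v ∈ Finset.univ.erase N.d, N.EX ∅ Ahat 1 v = 1 := by
        intro v hv
        rw [EX_one]
        by_cases hvA : v ∈ Ahat
        · rw [if_pos hvA]
        · rw [if_neg hvA]
          exact hall v (Finset.mem_erase.1 hv).1 hvA
      rw [Finset.sum_congr rfl this, Finset.sum_const, hcard]
      push_cast
      ring
  constructor
  · rintro ⟨S, hScard, hScov⟩
    refine ⟨Sum.inl '' ↑S ∪ {Sum.inr true}, ?_, ?_, ?_⟩
    · rintro x (⟨i, hi, rfl⟩ | rfl) <;> simp [hd]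
    · rw [Set.ncard_union_eq (by simp), Set.ncard_singleton,
        Set.ncard_image_of_injective _ Sum.inl_injective, Set.ncard_coe_finset, hScard]
    · rw [key _ (by rintro x (⟨i, hi, rfl⟩ | rfl) <;> simp [hd])]
      intro v hv hvA
      rw [hfull]
      intro u hu
      rcases v with i | c
      · have hiS : i ∉ S := by
          intro hiS
          exact hvA (Or.inl ⟨i, hiS, rfl⟩)
        rcases u with j | c'
        · rw [hbll]
          rw [if_neg]
          rintro ⟨hadj, hij⟩
          rcases hScov i j hadj with h | h
          · exact hiS h
          · exact hu (Or.inl ⟨j, h, rfl⟩)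
        · rcases c' with _ | _
          · rw [hblr]; simp
          · exact absurd (Or.inr rfl) hu
      · rcases c with _ | _
        · rw [hd] at hv; exact absurd rfl hv
        · exact absurd (Or.inr rfl) hvA
  · rintro ⟨Ahat, hsub, hcard, hσ⟩
    have hall := (key Ahat hsub).1 hσ
    have hdA : (Sum.inr false : Fin n ⊕ Bool) ∉ Ahat := fun h => (hsub h) (by rw [hd])
    have hm : (Sum.inr true : Fin n ⊕ Bool) ∈ Ahat := by
      by_contra hm
      have h1 := hall (Sum.inr true) (by rw [hd]; simp) hm
      rw [hfull] at h1
      have := h1 (Sum.inr false) hdA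
      rw [hbrr] at this
      simp at this
    set S : Finset (Fin n) := Finset.univ.filter (fun i => Sum.inl i ∈ Ahat) with hS
    have hSmem : ∀ i, i ∈ S ↔ Sum.inl i ∈ Ahat := by
      intro i; simp [hS]
    have hAeq : Ahat = Sum.inl '' ↑S ∪ {Sum.inr true} := by
      ext x
      constructor
      · intro hx
        rcases x with i | c
        · exact Or.inl ⟨i, (hSmem i).2 hx, rfl⟩
        · rcases c with _ | _
          · exact absurd hx hdA
          · exact Or.inr rfl
      · rintro (⟨i, hi, rfl⟩ | rfl)
        · exact (hSmem i).1 hi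
        · exact hm
    have hcardS : S.card = k := by
      rw [hAeq, Set.ncard_union_eq (by simp), Set.ncard_singleton,
        Set.ncard_image_of_injective _ Sum.inl_injective, Set.ncard_coe_finset] at hcard
      omega
    have hcov : ∀ i j : Fin n, H.Adj i j → i < j → i ∈ S ∨ j ∈ S := by
      intro i j hadj hij
      by_cases hiS : i ∈ S
      · exact Or.inl hiS
      right
      by_contra hjS
      have hiA : Sum.inl i ∉ Ahat := fun h => hiS ((hSmem i).2 h)
      have h1 := hall (Sum.inl i) (by rw [hd]; simp) hiA
      rw [hfull] at h1
      have h2 := h1 (Sum.inl j) (fun h => hjS ((hSmem j).2 h))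
      rw [hbll, if_pos ⟨hadj, hij⟩] at h2
      have hne : j ∈ outNbr H i := by simp [outNbr, hadj, hij]
      have : ((outNbr H i).card : ℝ) ≠ 0 := by
        exact_mod_cast Finset.card_ne_zero_of_mem hne
      exact this (by simpa [inv_eq_zero] using h2)
    refine ⟨S, hcardS, ?_⟩
    intro i j hadj
    rcases lt_trichotomy i j with h | h | h
    · exact hcov i j hadj h
    · exact absurd h (H.ne_of_adj hadj)
    · exact (hcov j i hadj.symm h).symm
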